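/- arXiv:1103.1232 — 2 statements merged into one kernel-verified Lean document; each statement's English description precedes it below -/
import Mathlib

section
/- The Higman group H_4 is isomorphic to the amalgamated free product G_{123} *_{F_{13}} G_{341}: letting F₂ be the free group on two generators x₁, x₃, φ₁ : F₂ → G_{123} the homomorphism with φ₁(x₁) = a₁, φ₁(x₃) = a₃, and φ₂ : F₂ → G_{341} the homomorphism with φ₂(x₁) = a₁, φ₂(x₃) = a₃, the pushout of φ₁ and φ₂ is isomorphic to H_4 via an isomorphism sending the image of each generator a_p to the generator a_p of H_4. -/
/-- The relators `a_p a_{p−1} a_p⁻¹ a_{p−1}⁻²` (for `p ∈ ℤ/qℤ`) of the Higman group. -/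
def higmanRels (q : ℕ) : Set (FreeGroup (ZMod q)) :=
  Set.range fun p : ZMod q =>
    FreeGroup.of p * FreeGroup.of (p - 1) * (FreeGroup.of p)⁻¹ *
      (FreeGroup.of (p - 1) * FreeGroup.of (p - 1))⁻¹

/-- The Higman group `H_q`, generated by `a_p` for `p ∈ ℤ/qℤ` subject to the relations
`a_p a_{p−1} a_p⁻¹ = a_{p−1}²`. -/
abbrev Higman (q : ℕ) : Type := PresentedGroup (higmanRels q)

/-- The generator `a_p` of the Higman group `H_q`. -/
def hgen (q : ℕ) (p : ZMod q) : Higman q := PresentedGroup.of p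

/-- The relators of the group G_{123} = ⟨a₁, a₂, a₃ ∣ a₂a₁a₂⁻¹ = a₁², a₃a₂a₃⁻¹ = a₂²⟩
(generator of index `i` standing for `a_{i+1}`). The group G_{341} = ⟨a₃, a₄, a₁ ∣
a₄a₃a₄⁻¹ = a₃², a₁a₄a₁⁻¹ = a₄²⟩ has the same presentation, with the generator of
index `0` standing for `a₃`, index `1` for `a₄` and index `2` for `a₁`. -/
def chainRels : Set (FreeGroup (Fin 3)) :=
  {FreeGroup.of 1 * FreeGroup.of 0 * (FreeGroup.of 1)⁻¹ * (FreeGroup.of 0 * FreeGroup.of 0)⁻¹,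
   FreeGroup.of 2 * FreeGroup.of 1 * (FreeGroup.of 2)⁻¹ * (FreeGroup.of 1 * FreeGroup.of 1)⁻¹}

/-- The group G_{123} (and also, under a different reading of the generators, G_{341}). -/
abbrev Gchain : Type := PresentedGroup chainRels

/-- The generators of G_{123} (resp. G_{341}). -/
def cgen (i : Fin 3) : Gchain := PresentedGroup.of i

/-- The free group F₂ on the two generators `x₁` (index 0) and `x₃` (index 1). -/
abbrev F2 : Type := FreeGroup (Fin 2)

/-- The homomorphism φ₁ : F₂ → G_{123}, x₁ ↦ a₁, x₃ ↦ a₃. -/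
def phi1 : F2 →* Gchain :=
  FreeGroup.lift fun i : Fin 2 => if i = 0 then cgen 0 else cgen 2

/-- The homomorphism φ₂ : F₂ → G_{341}, x₁ ↦ a₁, x₃ ↦ a₃ (in G_{341} the generator of
index `2` is `a₁` and the generator of index `0` is `a₃`). -/
def phi2 : F2 →* Gchain :=
  FreeGroup.lift fun i : Fin 2 => if i = 0 then cgen 2 else cgen 0

/-- The pair of homomorphisms (φ₁, φ₂) out of F₂, indexed by `Fin 2`. -/
def phiFam : ∀ _ : Fin 2, F2 →* Gchain := ![phi1, phi2]

/-! Both groups are presented on the generators `a₁, a₂, a₃, a₄`: the amalgamated product is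
generated by the two copies of `a₁, a₂, a₃` and of `a₃, a₄, a₁`, with the copies of `a₁` and `a₃`
identified, and its defining relations are those of the two factors, i.e. exactly the four
relations of `H₄`, two from each factor. Hence `a_p ↦ a_p` defines homomorphisms in both
directions, which are inverse to each other on generators. -/

open Monoid

theorem hgen_conj (q : ℕ) (p : ZMod q) :
    hgen q (p + 1) * hgen q p * (hgen q (p + 1))⁻¹ = hgen q p ^ 2 := by
  have h := PresentedGroup.one_of_mem (rels := higmanRels q) ⟨p + 1, rfl⟩
  simp only [add_sub_cancel_right] at h
  rw [sq, ← mul_inv_eq_one]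
  exact h

theorem cgen_conj (i : Fin 2) :
    cgen i.succ * cgen i.castSucc * (cgen i.succ)⁻¹ = cgen i.castSucc ^ 2 := by
  rw [sq, ← mul_inv_eq_one]
  fin_cases i
  · exact PresentedGroup.one_of_mem (Or.inl rfl)
  · exact PresentedGroup.one_of_mem (Or.inr rfl)

section

variable {G : Type*} [Group G]

theorem map_cgen_conj (f : Gchain →* G) (i : Fin 2) :
    f (cgen i.succ) * f (cgen i.castSucc) * (f (cgen i.succ))⁻¹ = f (cgen i.castSucc) ^ 2 := by
  simpa only [map_mul, map_inv, map_pow] using congrArg f (cgen_conj i)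

def Higman.lift {q : ℕ} (x : ZMod q → G) (hx : ∀ p, x (p + 1) * x p * (x (p + 1))⁻¹ = x p ^ 2) :
    Higman q →* G :=
  PresentedGroup.toGroup (f := x) <| by
    rintro _ ⟨p, rfl⟩
    simpa only [map_mul, map_inv, FreeGroup.lift_apply_of, sq, mul_inv_eq_one, sub_add_cancel]
      using hx (p - 1)

@[simp]
theorem Higman.lift_hgen {q : ℕ} (x : ZMod q → G)
    (hx : ∀ p, x (p + 1) * x p * (x (p + 1))⁻¹ = x p ^ 2) (p : ZMod q) :
    Higman.lift x hx (hgen q p) = x p :=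
  PresentedGroup.toGroup.of _

def Gchain.lift (x : Fin 3 → G)
    (hx : ∀ i : Fin 2, x i.succ * x i.castSucc * (x i.succ)⁻¹ = x i.castSucc ^ 2) :
    Gchain →* G :=
  PresentedGroup.toGroup (f := x) <| by
    simp only [Fin.forall_fin_two, Fin.succ_zero_eq_one, Fin.castSucc_zero, Fin.succ_one_eq_two,
      Fin.castSucc_one, sq] at hx
    rintro _ (rfl | rfl) <;> simp only [map_mul, map_inv, FreeGroup.lift_apply_of, mul_inv_eq_one]
    exacts [hx.1, hx.2]

theorem Gchain.hom_ext {f g : Gchain →* G} (h : ∀ i, f (cgen i) = g (cgen i)) : f = g :=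
  PresentedGroup.ext h

theorem Higman.hom_ext {q : ℕ} {f g : Higman q →* G} (h : ∀ p, f (hgen q p) = g (hgen q p)) :
    f = g :=
  PresentedGroup.ext h

end

def Gchain.toHigman (q : ℕ) (p : ZMod q) : Gchain →* Higman q :=
  Gchain.lift (fun i => hgen q (p + (i : ℕ))) fun i => by
    simpa only [Fin.val_succ, Fin.val_castSucc, Nat.cast_succ, ← add_assoc]
      using hgen_conj q (p + (i : ℕ))

theorem Gchain.toHigman_comp_phi1_eq_toHigman_comp_phi2 :
    (Gchain.toHigman 4 1).comp phi1 = (Gchain.toHigman 4 3).comp phi2 :=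
  FreeGroup.ext_hom _ _ fun j => by fin_cases j <;> rfl

theorem of_phi1_eq_of_phi2 (x : F2) :
    PushoutI.of (φ := phiFam) 0 (phi1 x) = PushoutI.of (φ := phiFam) 1 (phi2 x) :=
  (PushoutI.of_apply_eq_base phiFam 0 x).trans (PushoutI.of_apply_eq_base phiFam 1 x).symm

theorem of_zero_cgen_zero_eq_of_one_cgen_two :
    PushoutI.of (φ := phiFam) 0 (cgen 0) = PushoutI.of (φ := phiFam) 1 (cgen 2) :=
  of_phi1_eq_of_phi2 (FreeGroup.of 0)

theorem of_zero_cgen_two_eq_of_one_cgen_zero :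
    PushoutI.of (φ := phiFam) 0 (cgen 2) = PushoutI.of (φ := phiFam) 1 (cgen 0) :=
  of_phi1_eq_of_phi2 (FreeGroup.of 1)

def pushoutToHigman : PushoutI phiFam →* Higman 4 :=
  PushoutI.lift ![Gchain.toHigman 4 1, Gchain.toHigman 4 3] ((Gchain.toHigman 4 1).comp phi1)
    fun i => by
      fin_cases i
      exacts [rfl, Gchain.toHigman_comp_phi1_eq_toHigman_comp_phi2.symm]

-- `ZMod 4` unfolds to `Fin 4`: these are the images of `a₀ = a₄`, `a₁`, `a₂`, `a₃`.
def pushoutGen : ZMod 4 → PushoutI phiFam :=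
  ![PushoutI.of 1 (cgen 1), PushoutI.of 0 (cgen 0), PushoutI.of 0 (cgen 1), PushoutI.of 0 (cgen 2)]

def higmanToPushout : Higman 4 →* PushoutI phiFam :=
  Higman.lift pushoutGen fun p => by
    -- The relation between `a_p` and `a_{p+1}` holds in G_{123} for `p = 1, 2`, and in G_{341}
    -- for `p = 3, 0` once `a₃`, resp. `a₁`, is moved across the amalgamation.
    fin_cases p
    · have h := map_cgen_conj (PushoutI.of (φ := phiFam) 1) 1
      simp only [Fin.succ_one_eq_two, Fin.castSucc_one,
        ← of_zero_cgen_zero_eq_of_one_cgen_two] at h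
      exact h
    · exact map_cgen_conj (PushoutI.of (φ := phiFam) 0) 0
    · exact map_cgen_conj (PushoutI.of (φ := phiFam) 0) 1
    · have h := map_cgen_conj (PushoutI.of (φ := phiFam) 1) 0
      simp only [Fin.succ_zero_eq_one, Fin.castSucc_zero,
        ← of_zero_cgen_two_eq_of_one_cgen_zero] at h
      exact h

@[simp]
theorem pushoutToHigman_of_zero (g : Gchain) :
    pushoutToHigman (PushoutI.of 0 g) = Gchain.toHigman 4 1 g :=
  PushoutI.lift_of (φ := phiFam) _ _ _ g

@[simp]
theorem pushoutToHigman_of_one (g : Gchain) :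
    pushoutToHigman (PushoutI.of 1 g) = Gchain.toHigman 4 3 g :=
  PushoutI.lift_of (φ := phiFam) _ _ _ g

@[simp]
theorem higmanToPushout_hgen (p : ZMod 4) : higmanToPushout (hgen 4 p) = pushoutGen p :=
  Higman.lift_hgen _ _ p

theorem higmanToPushout_comp_pushoutToHigman :
    higmanToPushout.comp pushoutToHigman = MonoidHom.id _ := by
  refine PushoutI.hom_ext_nonempty fun j => Gchain.hom_ext fun i => ?_
  fin_cases j <;> fin_cases i
  -- `a₃` and `a₁` of G_{341} come back as their copies in G_{123}
  exacts [rfl, rfl, rfl, of_zero_cgen_two_eq_of_one_cgen_zero, rfl,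
    of_zero_cgen_zero_eq_of_one_cgen_two]

theorem pushoutToHigman_pushoutGen (p : ZMod 4) : pushoutToHigman (pushoutGen p) = hgen 4 p := by
  fin_cases p
  exacts [pushoutToHigman_of_one (cgen 1), pushoutToHigman_of_zero (cgen 0),
    pushoutToHigman_of_zero (cgen 1), pushoutToHigman_of_zero (cgen 2)]

theorem pushoutToHigman_comp_higmanToPushout :
    pushoutToHigman.comp higmanToPushout = MonoidHom.id _ :=
  Higman.hom_ext fun p => by simp [pushoutToHigman_pushoutGen]

/-- The Higman group H₄ is isomorphic to the amalgamated free product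
G_{123} *_{F_{13}} G_{341}, i.e. to the pushout of φ₁ : F₂ → G_{123} and φ₂ : F₂ → G_{341},
via an isomorphism sending the image of each generator `a_p` to the generator `a_p` of H₄. -/
theorem higman4_iso_pushout :
    ∃ ψ : Monoid.PushoutI phiFam ≃* Higman 4,
      ψ (Monoid.PushoutI.of (φ := phiFam) 0 (cgen 0)) = hgen 4 1 ∧
      ψ (Monoid.PushoutI.of (φ := phiFam) 0 (cgen 1)) = hgen 4 2 ∧
      ψ (Monoid.PushoutI.of (φ := phiFam) 0 (cgen 2)) = hgen 4 3 ∧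
      ψ (Monoid.PushoutI.of (φ := phiFam) 1 (cgen 0)) = hgen 4 3 ∧
      ψ (Monoid.PushoutI.of (φ := phiFam) 1 (cgen 1)) = hgen 4 0 ∧
      ψ (Monoid.PushoutI.of (φ := phiFam) 1 (cgen 2)) = hgen 4 1 :=
  ⟨pushoutToHigman.toMulEquiv higmanToPushout higmanToPushout_comp_pushoutToHigman
      pushoutToHigman_comp_higmanToPushout,
    pushoutToHigman_of_zero (cgen 0), pushoutToHigman_of_zero (cgen 1),
    pushoutToHigman_of_zero (cgen 2), pushoutToHigman_of_one (cgen 0),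
    pushoutToHigman_of_one (cgen 1), pushoutToHigman_of_one (cgen 2)⟩
end

section
/- The word problem of the algebra ℤ[1/2] ⋊ ℤ with swapping is decidable: letting Term be the inductive type of formal expressions built from the two constants A and T, a binary operation Mul, and unary operations Inv and Swap, with the partial evaluation eval : Term → Option (ℤ[1/2] × ℤ) defined by eval(A) = (1,0), eval(T) = (0,1), eval(Mul s t) = eval(s)·eval(t), eval(Inv s) = eval(s)⁻¹ (both in ℤ[1/2] ⋊ ℤ, and undefined if a subterm is undefined), and eval(Swap s) = (m, r) if eval(s) = (r, m) with r ∈ ℤ, undefined otherwise — there exists a computable function g : Term → Bool such that g(s) = true if and only if eval(s) is defined and equals the identity (0,0). -/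
/-- A rational number is *dyadic* (an element of ℤ[1/2]) if it has the form `u·2^x`
with `u, x ∈ ℤ`. -/
def IsDyadic (q : ℚ) : Prop := ∃ u x : ℤ, q = (u : ℚ) * 2 ^ x

theorem isDyadic_int (z : ℤ) : IsDyadic (z : ℚ) := ⟨z, 0, by norm_num⟩

theorem isDyadic_zero : IsDyadic (0 : ℚ) := ⟨0, 0, by norm_num⟩

theorem isDyadic_one : IsDyadic (1 : ℚ) := ⟨1, 0, by norm_num⟩

theorem IsDyadic.add {a b : ℚ} (ha : IsDyadic a) (hb : IsDyadic b) : IsDyadic (a + b) := by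
  obtain ⟨u, x, rfl⟩ := ha
  obtain ⟨v, y, rfl⟩ := hb
  rcases le_total x y with h | h
  · refine ⟨u + v * 2 ^ (y - x).toNat, x, ?_⟩
    have h2 : (((y - x).toNat : ℤ)) = y - x := Int.toNat_of_nonneg (by omega)
    have h3 : (2 : ℚ) ^ ((y - x).toNat) = (2 : ℚ) ^ (y - x : ℤ) := by
      rw [← zpow_natCast (2 : ℚ) (y - x).toNat, h2]
    have h4 : y - x + x = y := by omega
    push_cast
    rw [h3, add_mul, mul_assoc, ← zpow_add₀ (by norm_num : (2:ℚ) ≠ 0), h4]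
  · refine ⟨u * 2 ^ (x - y).toNat + v, y, ?_⟩
    have h2 : (((x - y).toNat : ℤ)) = x - y := Int.toNat_of_nonneg (by omega)
    have h3 : (2 : ℚ) ^ ((x - y).toNat) = (2 : ℚ) ^ (x - y : ℤ) := by
      rw [← zpow_natCast (2 : ℚ) (x - y).toNat, h2]
    have h4 : x - y + y = x := by omega
    push_cast
    rw [h3, add_mul, mul_assoc, ← zpow_add₀ (by norm_num : (2:ℚ) ≠ 0), h4]

theorem IsDyadic.neg {a : ℚ} (ha : IsDyadic a) : IsDyadic (-a) := by
  obtain ⟨u, x, rfl⟩ := ha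
  exact ⟨-u, x, by push_cast; ring⟩

theorem IsDyadic.zpow_mul (x : ℤ) {a : ℚ} (ha : IsDyadic a) : IsDyadic (2 ^ x * a) := by
  obtain ⟨u, y, rfl⟩ := ha
  exact ⟨u, x + y, by rw [zpow_add₀ (by norm_num : (2:ℚ) ≠ 0)]; ring⟩

theorem IsDyadic.mul_zpow {a : ℚ} (ha : IsDyadic a) (x : ℤ) : IsDyadic (a * 2 ^ x) := by
  obtain ⟨u, y, rfl⟩ := ha
  exact ⟨u, y + x, by rw [zpow_add₀ (by norm_num : (2:ℚ) ≠ 0)]; ring⟩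

/-- The additive group ℤ[1/2] of dyadic rationals. -/
def ZHalf : Type := {q : ℚ // IsDyadic q}

/-- The semidirect product ℤ[1/2] ⋊ ℤ: pairs `(r, m)` with `r ∈ ℤ[1/2]`, `m ∈ ℤ`,
and multiplication `(r, m)·(s, n) = (r + 2^m·s, m + n)`. -/
def SDP : Type := ZHalf × ℤ

instance : Group SDP where
  mul p q := (⟨p.1.1 + 2 ^ p.2 * q.1.1, p.1.2.add (IsDyadic.zpow_mul _ q.1.2)⟩, p.2 + q.2)
  one := (⟨0, isDyadic_zero⟩, 0)
  inv p := (⟨-(2 ^ (-p.2) * p.1.1), (IsDyadic.zpow_mul _ p.1.2).neg⟩, -p.2)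
  mul_assoc p q r := by
    refine Prod.ext (Subtype.ext ?_) ?_
    · show (p.1.1 + 2 ^ p.2 * q.1.1) + 2 ^ (p.2 + q.2) * r.1.1
        = p.1.1 + 2 ^ p.2 * (q.1.1 + 2 ^ q.2 * r.1.1)
      rw [zpow_add₀ (by norm_num : (2:ℚ) ≠ 0)]; ring
    · show p.2 + q.2 + r.2 = p.2 + (q.2 + r.2); ring
  one_mul p := by
    refine Prod.ext (Subtype.ext ?_) ?_
    · show (0 : ℚ) + 2 ^ (0 : ℤ) * p.1.1 = p.1.1
      norm_num
    · show 0 + p.2 = p.2; ring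
  mul_one p := by
    refine Prod.ext (Subtype.ext ?_) ?_
    · show p.1.1 + 2 ^ p.2 * 0 = p.1.1
      ring
    · show p.2 + 0 = p.2; ring
  inv_mul_cancel p := by
    refine Prod.ext (Subtype.ext ?_) ?_
    · show -(2 ^ (-p.2) * p.1.1) + 2 ^ (-p.2) * p.1.1 = (0 : ℚ)
      ring
    · show -p.2 + p.2 = 0; ring

@[simp] theorem SDP.mul_fst (p q : SDP) : (p * q).1.1 = p.1.1 + 2 ^ p.2 * q.1.1 := rfl
@[simp] theorem SDP.mul_snd (p q : SDP) : (p * q).2 = p.2 + q.2 := rfl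
@[simp] theorem SDP.one_fst : (1 : SDP).1.1 = 0 := rfl
@[simp] theorem SDP.one_snd : (1 : SDP).2 = 0 := rfl
@[simp] theorem SDP.inv_fst (p : SDP) : (p⁻¹).1.1 = -(2 ^ (-p.2) * p.1.1) := rfl
@[simp] theorem SDP.inv_snd (p : SDP) : (p⁻¹).2 = -p.2 := rfl

/-- Constructor for elements `(r, m)` of the semidirect product ℤ[1/2] ⋊ ℤ. -/
def SDP.mk (r : ZHalf) (m : ℤ) : SDP := (r, m)

/-- Formal expressions over the algebra ℤ[1/2] ⋊ ℤ with swapping: the constants `A` and `T`,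
a binary multiplication, inversion, and the (partial) swap operation. -/
inductive Term : Type
  | A : Term
  | T : Term
  | Mul : Term → Term → Term
  | Inv : Term → Term
  | Swap : Term → Term

/-- Partial evaluation of a term in ℤ[1/2] ⋊ ℤ: `A` evaluates to `(1,0)`, `T` to `(0,1)`,
`Mul` and `Inv` to the group operations, and `Swap s` to `(m, r)` whenever `s` evaluates to
`(r, m)` with `r ∈ ℤ` (and is undefined otherwise). -/
noncomputable def evalT : Term → Option SDP
  | .A => some (SDP.mk ⟨1, isDyadic_one⟩ 0)
  | .T => some (SDP.mk ⟨0, isDyadic_zero⟩ 1)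
  | .Mul s t => (evalT s).bind fun a => (evalT t).bind fun b => some (a * b)
  | .Inv s => (evalT s).bind fun a => some a⁻¹
  | .Swap s => (evalT s).bind fun a =>
      @dite (Option SDP) (∃ z : ℤ, a.1.1 = (z : ℚ)) (Classical.propDecidable _)
        (fun h => some (SDP.mk ⟨(a.2 : ℚ), isDyadic_int a.2⟩ h.choose))
        (fun _ => none)

/-- An explicit Gödel numbering of terms. -/
def encT : Term → ℕ
  | .A => Nat.pair 0 0
  | .T => Nat.pair 1 0
  | .Mul s t => Nat.pair 2 (Nat.pair (encT s) (encT t))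
  | .Inv s => Nat.pair 3 (encT s)
  | .Swap s => Nat.pair 4 (encT s)

/-! An element `(r, m)` of ℤ[1/2] ⋊ ℤ can be stored exactly as natural-number data: an integer
as a difference of two naturals and `r` as such an integer divided by a power of two. On this
representation multiplication and inversion are given by polynomial formulas in the data, and
the swap is defined exactly when the numerator `a - b` is divisible by `2 ^ k`, i.e. when
`a ≡ b [MOD 2 ^ k]`, a primitive recursive test. Evaluating a term from its Gödel number is then
a course-of-values recursion over the codes of its subterms, hence primitive recursive, and the
result is the identity iff both differences vanish. -/

theorem SDP.ext {p q : SDP} (h₁ : p.1.1 = q.1.1) (h₂ : p.2 = q.2) : p = q :=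
  Prod.ext (Subtype.ext h₁) h₂

noncomputable def SDP.swap (a : SDP) : Option SDP :=
  @dite (Option SDP) (∃ z : ℤ, a.1.1 = (z : ℚ)) (Classical.propDecidable _)
    (fun h => some (SDP.mk ⟨(a.2 : ℚ), isDyadic_int a.2⟩ h.choose))
    (fun _ => none)

theorem evalT_swap (s : Term) : evalT (.Swap s) = (evalT s).bind SDP.swap := rfl

theorem SDP.swap_of_eq_intCast {a : SDP} {z : ℤ} (h : a.1.1 = z) :
    a.swap = some (SDP.mk ⟨(a.2 : ℚ), isDyadic_int a.2⟩ z) := by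
  have hex : ∃ w : ℤ, a.1.1 = w := ⟨z, h⟩
  rw [SDP.swap, dif_pos hex, ← Int.cast_inj.mp (hex.choose_spec.symm.trans h)]

theorem SDP.swap_eq_none {a : SDP} (h : ¬∃ z : ℤ, a.1.1 = z) : a.swap = none :=
  dif_neg h

namespace WordProblem

def diff (p : ℕ × ℕ) : ℤ := p.1 - p.2

@[simp] theorem diff_add (p q : ℕ × ℕ) : diff (p + q) = diff p + diff q := by
  simp only [diff, Prod.fst_add, Prod.snd_add, Nat.cast_add]; ring

@[simp] theorem diff_smul (c : ℕ) (p : ℕ × ℕ) : diff (c • p) = c * diff p := by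
  simp only [diff, Prod.smul_fst, Prod.smul_snd, smul_eq_mul, Nat.cast_mul]; ring

@[simp] theorem diff_swap (p : ℕ × ℕ) : diff p.swap = -diff p := by
  simp only [diff, Prod.fst_swap, Prod.snd_swap]; ring

theorem diff_eq_zero_iff {p : ℕ × ℕ} : diff p = 0 ↔ p.1 = p.2 := by
  simp only [diff, sub_eq_zero, Nat.cast_inj]

theorem diff_div_mul {p : ℕ × ℕ} {n : ℕ} (h : p.1 % n = p.2 % n) :
    diff (p.1 / n, p.2 / n) * n = diff p := by
  have h₁ := congrArg (Nat.cast (R := ℤ)) (Nat.div_add_mod p.1 n)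
  have h₂ := congrArg (Nat.cast (R := ℤ)) (Nat.div_add_mod p.2 n)
  have h' := congrArg (Nat.cast (R := ℤ)) h
  push_cast [diff] at h₁ h₂ h' ⊢
  linear_combination h₁ - h₂ - h'

def dyadicVal (d : (ℕ × ℕ) × ℕ) : ℚ := diff d.1 / 2 ^ d.2

theorem isDyadic_dyadicVal (d : (ℕ × ℕ) × ℕ) : IsDyadic (dyadicVal d) :=
  ⟨diff d.1, -d.2, by rw [dyadicVal, zpow_neg, zpow_natCast, div_eq_mul_inv]⟩

theorem dyadicVal_eq_intCast_iff {d : (ℕ × ℕ) × ℕ} {z : ℤ} :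
    dyadicVal d = z ↔ diff d.1 = z * 2 ^ d.2 := by
  rw [dyadicVal, div_eq_iff (by positivity)]
  exact_mod_cast Iff.rfl

theorem exists_dyadicVal_eq_intCast_iff {d : (ℕ × ℕ) × ℕ} :
    (∃ z : ℤ, dyadicVal d = z) ↔ d.1.1 % 2 ^ d.2 = d.1.2 % 2 ^ d.2 := by
  simp_rw [dyadicVal_eq_intCast_iff, mul_comm _ ((2 : ℤ) ^ _), ← dvd_def]
  change _ ↔ d.1.1 ≡ d.1.2 [MOD 2 ^ d.2]
  rw [Nat.ModEq.comm, Nat.modEq_iff_dvd]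
  push_cast [diff]
  rfl

/-- `((a, k), m)` represents `(diff a / 2 ^ k, diff m) ∈ ℤ[1/2] ⋊ ℤ`. -/
abbrev State := ((ℕ × ℕ) × ℕ) × (ℕ × ℕ)

def toSDP (x : State) : SDP := (⟨dyadicVal x.1, isDyadic_dyadicVal x.1⟩, diff x.2)

@[simp] theorem toSDP_fst (x : State) : (toSDP x).1.1 = dyadicVal x.1 := rfl
@[simp] theorem toSDP_snd (x : State) : (toSDP x).2 = diff x.2 := rfl

theorem toSDP_eq_one_iff {x : State} : toSDP x = 1 ↔ x.1.1.1 = x.1.1.2 ∧ x.2.1 = x.2.2 := by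
  have h₁ : dyadicVal x.1 = 0 ↔ x.1.1.1 = x.1.1.2 := by
    simpa [diff_eq_zero_iff] using dyadicVal_eq_intCast_iff (d := x.1) (z := 0)
  rw [← h₁, ← diff_eq_zero_iff]
  exact ⟨fun h => ⟨congrArg (·.1.1) h, congrArg (·.2) h⟩,
    fun ⟨h₁, h₂⟩ => SDP.ext h₁ h₂⟩

/-- For `x = ((a, j), m)` and `y = ((b, k), n)`: `a / 2 ^ j + 2 ^ m * (b / 2 ^ k)` written over
the common denominator `2 ^ (j + k + m.2)`. -/
def mulRep (x y : State) : State :=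
  ((2 ^ (y.1.2 + x.2.2) • x.1.1 + 2 ^ (x.2.1 + x.1.2) • y.1.1, x.1.2 + y.1.2 + x.2.2),
    x.2 + y.2)

def invRep (x : State) : State :=
  ((2 ^ x.2.2 • x.1.1.swap, x.1.2 + x.2.1), x.2.swap)

def swapRep (x : State) : Option State :=
  if x.1.1.1 % 2 ^ x.1.2 = x.1.1.2 % 2 ^ x.1.2 then
    some (((x.2, 0), (x.1.1.1 / 2 ^ x.1.2, x.1.1.2 / 2 ^ x.1.2)))
  else none

theorem toSDP_mulRep (x y : State) : toSDP (mulRep x y) = toSDP x * toSDP y := by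
  refine SDP.ext ?_ (by simp [mulRep])
  simp only [toSDP_fst, toSDP_snd, SDP.mul_fst, mulRep, dyadicVal, diff_add, diff_smul]
  simp only [diff]
  push_cast
  rw [zpow_sub₀ two_ne_zero, zpow_natCast, zpow_natCast]
  field_simp
  ring

theorem toSDP_invRep (x : State) : toSDP (invRep x) = (toSDP x)⁻¹ := by
  refine SDP.ext ?_ (by simp [invRep])
  simp only [toSDP_fst, toSDP_snd, SDP.inv_fst, invRep, dyadicVal, diff_smul, diff_swap]
  simp only [diff]
  push_cast
  rw [zpow_neg, zpow_sub₀ two_ne_zero, zpow_natCast, zpow_natCast]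
  field_simp
  ring

theorem map_swapRep (x : State) : (swapRep x).map toSDP = (toSDP x).swap := by
  unfold swapRep
  split_ifs with h
  · rw [SDP.swap_of_eq_intCast (z := diff (x.1.1.1 / 2 ^ x.1.2, x.1.1.2 / 2 ^ x.1.2))]
    · refine congrArg some (SDP.ext ?_ rfl)
      simp [SDP.mk, dyadicVal, diff]
    · exact dyadicVal_eq_intCast_iff.mpr (by exact_mod_cast (diff_div_mul h).symm)
  · exact (SDP.swap_eq_none (exists_dyadicVal_eq_intCast_iff.not.mpr h)).symm

def repA : State := (((1, 0), 0), (0, 0))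

def repT : State := (((0, 0), 0), (1, 0))

def children (n : ℕ) : List ℕ :=
  if n.unpair.1 < 2 then []
  else if n.unpair.1 = 2 then [n.unpair.2.unpair.1, n.unpair.2.unpair.2]
  else [n.unpair.2]

theorem lt_of_mem_children {m n : ℕ} (h : m ∈ children n) : m < n := by
  have hn := Nat.unpair_add_le n
  have hn₂ := Nat.unpair_add_le n.unpair.2
  unfold children at h
  split_ifs at h <;> simp only [List.mem_cons, List.not_mem_nil, or_false] at h <;> omega

def evalStep (n : ℕ) (l : List (Option State)) : Option State :=
  if n.unpair.1 = 0 then some repA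
  else if n.unpair.1 = 1 then some repT
  else if n.unpair.1 = 2 then (l[0]?.getD none).bind fun x => (l[1]?.getD none).map (mulRep x)
  else if n.unpair.1 = 3 then (l[0]?.getD none).map invRep
  else if n.unpair.1 = 4 then (l[0]?.getD none).bind swapRep
  else none

def evalCode (n : ℕ) : Option State :=
  evalStep n ((children n).attach.map fun m => evalCode m.1)
termination_by n
decreasing_by exact lt_of_mem_children m.2

theorem evalCode_eq (n : ℕ) : evalCode n = evalStep n ((children n).map evalCode) := by
  rw [evalCode, List.map_attach_eq_pmap, List.pmap_eq_map]

theorem evalCode_encT_A : evalCode (encT .A) = some repA := by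
  simp [evalCode_eq, evalStep, encT]

theorem evalCode_encT_T : evalCode (encT .T) = some repT := by
  simp [evalCode_eq, evalStep, encT]

theorem evalCode_encT_Mul (s t : Term) :
    evalCode (encT (.Mul s t)) =
      (evalCode (encT s)).bind fun x => (evalCode (encT t)).map (mulRep x) := by
  simp [evalCode_eq, evalStep, children, encT]

theorem evalCode_encT_Inv (s : Term) :
    evalCode (encT (.Inv s)) = (evalCode (encT s)).map invRep := by
  simp [evalCode_eq, evalStep, children, encT]

theorem evalCode_encT_Swap (s : Term) :
    evalCode (encT (.Swap s)) = (evalCode (encT s)).bind swapRep := by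
  simp [evalCode_eq, evalStep, children, encT]

theorem toSDP_repA : toSDP repA = SDP.mk ⟨1, isDyadic_one⟩ 0 :=
  SDP.ext (by simp [repA, dyadicVal, diff, SDP.mk]) rfl

theorem toSDP_repT : toSDP repT = SDP.mk ⟨0, isDyadic_zero⟩ 1 :=
  SDP.ext (by simp [repT, dyadicVal, diff, SDP.mk]) rfl

theorem evalT_eq_map_evalCode (s : Term) : evalT s = (evalCode (encT s)).map toSDP := by
  induction s with
  | A => rw [evalCode_encT_A, Option.map_some, toSDP_repA]; rfl
  | T => rw [evalCode_encT_T, Option.map_some, toSDP_repT]; rfl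
  | Mul s t ihs iht =>
    rw [evalT, ihs, iht, evalCode_encT_Mul]
    cases evalCode (encT s) <;> cases evalCode (encT t) <;> simp [toSDP_mulRep]
  | Inv s ih =>
    rw [evalT, ih, evalCode_encT_Inv]
    cases evalCode (encT s) <;> simp [toSDP_invRep]
  | Swap s ih =>
    rw [evalT_swap, ih, evalCode_encT_Swap]
    cases evalCode (encT s) <;> simp [map_swapRep]

def evalsToOne (n : ℕ) : Bool :=
  ((evalCode n).map fun x => decide (x.1.1.1 = x.1.1.2 ∧ x.2.1 = x.2.2)).getD false

theorem evalsToOne_iff (n : ℕ) : evalsToOne n = true ↔ (evalCode n).map toSDP = some 1 := by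
  unfold evalsToOne
  cases evalCode n <;> simp [toSDP_eq_one_iff]

section Primrec

open Primrec

theorem primrec_two_pow : Primrec (2 ^ · : ℕ → ℕ) :=
  (Primrec₂.unpaired'.mp Nat.Primrec.pow).comp (const 2) Primrec.id

theorem primrec_prod_add : Primrec₂ ((· + ·) : ℕ × ℕ → ℕ × ℕ → ℕ × ℕ) :=
  pair (nat_add.comp (fst.comp fst) (fst.comp snd)) (nat_add.comp (snd.comp fst) (snd.comp snd))

theorem primrec_prod_smul : Primrec₂ ((· • ·) : ℕ → ℕ × ℕ → ℕ × ℕ) :=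
  pair (nat_mul.comp fst (fst.comp snd)) (nat_mul.comp fst (snd.comp snd))

theorem primrec_prod_swap : Primrec (Prod.swap : ℕ × ℕ → ℕ × ℕ) :=
  pair snd fst

theorem primrec_mulRep : Primrec₂ mulRep := by
  have x₁₁ : Primrec fun p : State × State => p.1.1.1 := fst.comp (fst.comp fst)
  have x₁₂ : Primrec fun p : State × State => p.1.1.2 := snd.comp (fst.comp fst)
  have x₂ : Primrec fun p : State × State => p.1.2 := snd.comp fst
  have x₂₁ : Primrec fun p : State × State => p.1.2.1 := fst.comp x₂
  have x₂₂ : Primrec fun p : State × State => p.1.2.2 := snd.comp x₂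
  have y₁₁ : Primrec fun p : State × State => p.2.1.1 := fst.comp (fst.comp snd)
  have y₁₂ : Primrec fun p : State × State => p.2.1.2 := snd.comp (fst.comp snd)
  have y₂ : Primrec fun p : State × State => p.2.2 := snd.comp snd
  exact pair
    (pair
      (primrec_prod_add.comp
        (primrec_prod_smul.comp (primrec_two_pow.comp (nat_add.comp y₁₂ x₂₂)) x₁₁)
        (primrec_prod_smul.comp (primrec_two_pow.comp (nat_add.comp x₂₁ x₁₂)) y₁₁))
      (nat_add.comp (nat_add.comp x₁₂ y₁₂) x₂₂))
    (primrec_prod_add.comp x₂ y₂)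

theorem primrec_invRep : Primrec invRep :=
  pair
    (pair
      (primrec_prod_smul.comp (primrec_two_pow.comp (snd.comp snd))
        (primrec_prod_swap.comp (fst.comp fst)))
      (nat_add.comp (snd.comp fst) (fst.comp snd)))
    (primrec_prod_swap.comp snd)

theorem primrec_swapRep : Primrec swapRep := by
  have a₁ : Primrec fun x : State => x.1.1.1 := fst.comp (fst.comp fst)
  have a₂ : Primrec fun x : State => x.1.1.2 := snd.comp (fst.comp fst)
  have p : Primrec fun x : State => 2 ^ x.1.2 := primrec_two_pow.comp (snd.comp fst)
  exact ite (Primrec.eq.comp (nat_mod.comp a₁ p) (nat_mod.comp a₂ p))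
    (option_some.comp
      (pair (pair snd (const 0)) (pair (nat_div.comp a₁ p) (nat_div.comp a₂ p))))
    (const none)

theorem primrec_children : Primrec children := by
  have tag : Primrec fun n : ℕ => n.unpair.1 := fst.comp unpair
  have arg : Primrec fun n : ℕ => n.unpair.2 := snd.comp unpair
  exact ite (nat_lt.comp tag (const 2)) (const [])
    (ite (Primrec.eq.comp tag (const 2))
      (list_cons.comp (fst.comp (unpair.comp arg))
        (list_cons.comp (snd.comp (unpair.comp arg)) (const [])))
      (list_cons.comp arg (const [])))

theorem primrec_evalStep : Primrec₂ evalStep := by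
  have tag : Primrec fun p : ℕ × List (Option State) => p.1.unpair.1 :=
    fst.comp (unpair.comp fst)
  have arg : ∀ i : ℕ, Primrec fun p : ℕ × List (Option State) => p.2[i]?.getD none :=
    fun i => option_getD.comp (list_getElem?.comp snd (const i)) (const none)
  exact ite (Primrec.eq.comp tag (const 0)) (const _)
    (ite (Primrec.eq.comp tag (const 1)) (const _)
      (ite (Primrec.eq.comp tag (const 2))
        (option_bind (arg 0)
          (option_map ((arg 1).comp fst) (primrec_mulRep.comp (snd.comp fst) snd)))
        (ite (Primrec.eq.comp tag (const 3)) (option_map (arg 0) (primrec_invRep.comp snd))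
          (ite (Primrec.eq.comp tag (const 4)) (option_bind (arg 0) (primrec_swapRep.comp snd))
            (const none)))))

theorem primrec_evalCode : Primrec evalCode :=
  nat_omega_rec' evalCode Primrec.id primrec_children
    (Primrec₂.option_some_iff.mpr primrec_evalStep) (fun _ _ => lt_of_mem_children)
    (fun n => by rw [evalCode_eq n])

theorem primrec_evalsToOne : Primrec evalsToOne := by
  have isOne : PrimrecPred fun x : State => x.1.1.1 = x.1.1.2 ∧ x.2.1 = x.2.2 :=
    (Primrec.eq.comp (fst.comp (fst.comp fst)) (snd.comp (fst.comp fst))).and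
      (Primrec.eq.comp (fst.comp snd) (snd.comp snd))
  exact option_getD.comp (option_map primrec_evalCode (isOne.decide.comp snd).to₂) (const false)

end Primrec

end WordProblem

/-- The word problem of the algebra ℤ[1/2] ⋊ ℤ with swapping is decidable:
there is a computable function `g : Term → Bool` (computable in the sense that it is realized,
through the Gödel numbering `encT`, by a computable function on ℕ) such that `g s = true` if
and only if `eval s` is defined and equals the identity `(0, 0)`. -/
theorem sdp_with_swap_word_problem_decidable :
    ∃ g : Term → Bool,
      (∃ G : ℕ → Bool, Computable G ∧ ∀ s : Term, G (encT s) = g s) ∧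
      ∀ s : Term, g s = true ↔ evalT s = some 1 :=
  ⟨fun s => WordProblem.evalsToOne (encT s),
    ⟨_, WordProblem.primrec_evalsToOne.to_comp, fun _ => rfl⟩,
    fun s => by rw [WordProblem.evalsToOne_iff, WordProblem.evalT_eq_map_evalCode]⟩
end
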